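/- Let h(x) be a nonzero polynomial with real coefficients with h(0) ≠ 0, let (λ_i)_{i=1}^k be a (not necessarily distinct) finite sequence of positive real numbers, and let f(x) = h(x) · Π_{i=1}^k (x - λ_i). Then there exists a nonnegative even integer ν such that V_f(0) = k + V_h(0) + ν, where V_f(0) and V_h(0) denote the numbers of sign variations in the coefficient sequences of f and h, respectively. -/

import Mathlib

open Classical in
/-- Number of sign variations in a finite sequence of reals: the number of pairs of
consecutive terms in the subsequence of nonzero terms that have opposite signs. -/
noncomputable def signVar (l : List ℝ) : ℕ :=
  let nz := l.filter (fun x => decide (x ≠ 0))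
  (nz.zip nz.tail).countP (fun p => decide (p.1 * p.2 < 0))

/-!
`signVar` of the coefficient list is Mathlib's `Polynomial.signVariations`, which reads the
coefficients from the top. Hence `V_f ≥ V_h + k` is `k` applications of Descartes' lemma
`Polynomial.succ_signVariations_le_X_sub_C_mul`. For the parity, a polynomial with nonzero
constant term has an even number of sign variations iff its constant and leading coefficients
have the same sign (drop the leading term and induct). Multiplying `h` by the monic
`∏ (X - λᵢ)` keeps the leading coefficient and multiplies the constant term by `∏ (-λᵢ)`,
whose sign is `(-1)^k`.
-/

namespace List

variable {α : Type*}

theorem zip_dropLast_tail (l : List α) : l.dropLast.zip l.tail = l.zip l.tail := by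
  induction l with
  | nil => rfl
  | cons a t ih => cases t <;> simp_all

theorem zip_tail_dropLast (l : List α) : l.tail.zip l.dropLast = l.tail.zip l := by
  induction l with
  | nil => rfl
  | cons a t ih => cases t <;> simp_all

theorem reverse_zip_tail (l : List α) :
    (l.zip l.tail).reverse = (l.reverse.zip l.reverse.tail).map Prod.swap := by
  rw [zip_swap, ← zip_dropLast_tail, zip_eq_zipWith, zip_eq_zipWith,
    reverse_zipWith (by simp), ← zip_eq_zipWith, ← zip_eq_zipWith, ← zip_tail_dropLast]
  simp

theorem countP_zip_tail_reverse (p : α → α → Bool) (hp : ∀ a b, p a b = p b a) (l : List α) :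
    (l.reverse.zip l.reverse.tail).countP (fun q => p q.1 q.2) =
      (l.zip l.tail).countP (fun q => p q.1 q.2) := by
  rw [← countP_reverse (l := l.zip l.tail), reverse_zip_tail, countP_map]
  exact countP_congr fun q _ => by simp [hp]

theorem length_destutter'_ne [DecidableEq α] (a : α) (l : List α) :
    (l.destutter' (· ≠ ·) a).length = ((a :: l).zip l).countP (fun q => q.1 ≠ q.2) + 1 := by
  induction l generalizing a with
  | nil => simp
  | cons b l ih => by_cases hab : a = b <;> simp_all [destutter'_cons_neg]

theorem length_destutter_ne_sub_one [DecidableEq α] (l : List α) :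
    (l.destutter (· ≠ ·)).length - 1 = (l.zip l.tail).countP (fun q => q.1 ≠ q.2) := by
  cases l with
  | nil => simp
  | cons a l => simp [destutter_cons', length_destutter'_ne]

end List

section Sign

variable {R : Type*}

lemma sign_eq_neg_sign_iff [Zero R] [LinearOrder R] {a b : R} (ha : a ≠ 0) (hb : b ≠ 0) :
    SignType.sign a = -SignType.sign b ↔ ¬(0 < a ↔ 0 < b) := by
  rcases ha.lt_or_gt with ha | ha <;> rcases hb.lt_or_gt with hb | hb <;>
    simp [ha, hb, ha.not_gt, hb.not_gt]

variable [Ring R] [LinearOrder R] [IsStrictOrderedRing R]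

lemma mul_neg_iff_sign_ne {a b : R} (ha : a ≠ 0) (hb : b ≠ 0) :
    a * b < 0 ↔ SignType.sign a ≠ SignType.sign b := by
  rcases ha.lt_or_gt with ha | ha <;> rcases hb.lt_or_gt with hb | hb <;>
    simp [ha, hb, ha.le, hb.le, mul_neg_iff, sign_neg, sign_pos]

lemma mul_pos_iff_of_ne_zero {a b : R} (ha : a ≠ 0) (hb : b ≠ 0) :
    0 < a * b ↔ (0 < a ↔ 0 < b) := by
  rcases ha.lt_or_gt with ha | ha <;> rcases hb.lt_or_gt with hb | hb <;>
    simp [mul_pos_iff, ha, hb, ha.not_gt, hb.not_gt]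

end Sign

namespace Polynomial

lemma ne_zero_of_coeff_ne_zero {R : Type*} [Semiring R] {P : R[X]} {n : ℕ} (h : P.coeff n ≠ 0) :
    P ≠ 0 := by
  rintro rfl
  exact h (coeff_zero n)

theorem coeff_zero_prod_X_sub_C {R ι : Type*} [CommRing R] (s : Finset ι) (lam : ι → R) :
    (∏ i ∈ s, (X - C (lam i))).coeff 0 = (-1) ^ s.card * ∏ i ∈ s, lam i := by
  simp [coeff_zero_prod, Finset.prod_neg]

section OrderedRing

variable {R : Type*} [Ring R] [LinearOrder R] [IsStrictOrderedRing R]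

theorem even_signVariations_iff {P : R[X]} (h0 : P.coeff 0 ≠ 0) :
    Even P.signVariations ↔ 0 < P.coeff 0 * P.leadingCoeff := by
  induction hn : P.natDegree using Nat.strong_induction_on generalizing P with
  | _ n ih =>
  rcases Nat.eq_zero_or_pos n with rfl | hn0
  · rw [eq_C_of_natDegree_eq_zero hn, ← monomial_zero_left, signVariations_monomial]
    simpa using mul_self_pos.mpr h0
  have hE0 : P.eraseLead.coeff 0 = P.coeff 0 := eraseLead_coeff_of_ne 0 (by omega)
  have hE : P.eraseLead ≠ 0 := ne_zero_of_coeff_ne_zero (hE0 ▸ h0)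
  have hP : P ≠ 0 := ne_zero_of_coeff_ne_zero h0
  have hl := leadingCoeff_ne_zero.mpr hP
  have he := leadingCoeff_ne_zero.mpr hE
  have ihE := ih _ (hn ▸ (eraseLead_natDegree_lt_or_eraseLead_eq_zero P).resolve_right hE)
    (hE0 ▸ h0) rfl
  rw [hE0, mul_pos_iff_of_ne_zero h0 he] at ihE
  rw [signVariations_eq_eraseLead_add_ite hP, mul_pos_iff_of_ne_zero h0 hl]
  split_ifs with hs <;> rw [sign_eq_neg_sign_iff hl he] at hs
  · rw [Nat.even_add_one, ihE]
    tauto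
  · rw [add_zero, ihE]
    tauto

end OrderedRing

section CommOrderedRing

variable {R : Type*} [CommRing R] [LinearOrder R] [IsStrictOrderedRing R]

theorem even_signVariations_mul_iff {P Q : R[X]} (hP : P.coeff 0 ≠ 0) (hQ : Q.coeff 0 ≠ 0) :
    Even (P * Q).signVariations ↔ (Even P.signVariations ↔ Even Q.signVariations) := by
  have hPQ : (P * Q).coeff 0 ≠ 0 := by
    rw [mul_coeff_zero]
    exact mul_ne_zero hP hQ
  have hlP := leadingCoeff_ne_zero.mpr (ne_zero_of_coeff_ne_zero hP)
  have hlQ := leadingCoeff_ne_zero.mpr (ne_zero_of_coeff_ne_zero hQ)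
  rw [even_signVariations_iff hPQ, even_signVariations_iff hP, even_signVariations_iff hQ,
    mul_coeff_zero, leadingCoeff_mul, mul_mul_mul_comm,
    mul_pos_iff_of_ne_zero (mul_ne_zero hP hlP) (mul_ne_zero hQ hlQ)]

variable {ι : Type*} {lam : ι → R}

theorem coeff_zero_prod_X_sub_C_ne_zero (s : Finset ι) (hlam : ∀ i ∈ s, 0 < lam i) :
    (∏ i ∈ s, (X - C (lam i))).coeff 0 ≠ 0 := by
  rw [coeff_zero_prod_X_sub_C]
  exact mul_ne_zero (by simp) (Finset.prod_pos hlam).ne'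

theorem even_signVariations_prod_X_sub_C_iff (s : Finset ι) (hlam : ∀ i ∈ s, 0 < lam i) :
    Even (∏ i ∈ s, (X - C (lam i))).signVariations ↔ Even s.card := by
  rw [even_signVariations_iff (coeff_zero_prod_X_sub_C_ne_zero s hlam),
    (monic_prod_of_monic _ _ fun i _ => monic_X_sub_C _).leadingCoeff, mul_one,
    coeff_zero_prod_X_sub_C, mul_pos_iff_of_pos_right (Finset.prod_pos hlam), neg_one_pow_eq_ite]
  split_ifs with he <;> simp [he]

theorem signVariations_add_card_le_mul_prod_X_sub_C {P : R[X]} (hP : P ≠ 0) (s : Finset ι)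
    (hlam : ∀ i ∈ s, 0 < lam i) :
    P.signVariations + s.card ≤ (P * ∏ i ∈ s, (X - C (lam i))).signVariations := by
  classical
  induction s using Finset.induction_on with
  | empty => simp
  | insert a s has ih =>
    rw [Finset.prod_insert has, Finset.card_insert_of_notMem has, mul_left_comm, ← add_assoc]
    have hQ : (∏ i ∈ s, (X - C (lam i))).Monic :=
      monic_prod_of_monic _ _ fun i _ => monic_X_sub_C _
    exact (Nat.add_le_add_right (ih fun i hi => hlam i (Finset.mem_insert_of_mem hi)) 1).trans
      (succ_signVariations_le_X_sub_C_mul (hlam a (Finset.mem_insert_self a s))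
        (mul_ne_zero hP hQ.ne_zero))

end CommOrderedRing

end Polynomial

lemma signVar_reverse (l : List ℝ) : signVar l.reverse = signVar l := by
  unfold signVar
  rw [List.filter_reverse]
  exact List.countP_zip_tail_reverse (fun x y => decide (x * y < 0))
    (fun x y => by rw [mul_comm]) _

lemma signVar_eq_countP_sign (l : List ℝ) :
    signVar l = (((l.map SignType.sign).filter (· ≠ 0)).zip
      ((l.map SignType.sign).filter (· ≠ 0)).tail).countP (fun q => q.1 ≠ q.2) := by
  have hfilter :
      (fun s : SignType => decide (s ≠ 0)) ∘ SignType.sign = fun x : ℝ => decide (x ≠ 0) := by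
    funext x
    simp
  rw [List.filter_map, hfilter, ← List.map_tail, List.zip_map, List.countP_map, signVar]
  refine List.countP_congr fun q hq => ?_
  have hq1 := (List.of_mem_zip hq).1
  have hq2 := List.mem_of_mem_tail (List.of_mem_zip hq).2
  simp only [List.mem_filter, decide_eq_true_eq] at hq1 hq2
  simp [mul_neg_iff_sign_ne hq1.2 hq2.2]

open Polynomial in
theorem signVar_coeff_eq_signVariations (p : ℝ[X]) :
    signVar ((List.range (p.natDegree + 1)).map p.coeff) = p.signVariations := by
  rcases eq_or_ne p 0 with rfl | hp
  · simp [signVar]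
  rw [signVariations, List.length_destutter_ne_sub_one, ← signVar_eq_countP_sign, coeffList,
    withBotSucc_degree_eq_natDegree_add_one hp, List.map_reverse, signVar_reverse]

open Polynomial in
theorem sign_variation_mul_pos_linear_factors_general (k : ℕ) (h : Polynomial ℝ)
    (h0 : h.eval 0 ≠ 0) (lam : Fin k → ℝ) (hlam : ∀ i, 0 < lam i)
    (f : Polynomial ℝ)
    (hf : f = h * ∏ i : Fin k, (Polynomial.X - Polynomial.C (lam i))) :
    ∃ ν : ℕ, Even ν ∧
      signVar ((List.range (f.natDegree + 1)).map f.coeff)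
        = k + signVar ((List.range (h.natDegree + 1)).map h.coeff) + ν := by
  have hlam' : ∀ i ∈ Finset.univ, 0 < lam i := fun i _ => hlam i
  have hh0 : h.coeff 0 ≠ 0 := by rwa [coeff_zero_eq_eval_zero]
  have hle : h.signVariations + k ≤ f.signVariations := by
    simpa [hf] using signVariations_add_card_le_mul_prod_X_sub_C
      (ne_zero_of_coeff_ne_zero hh0) Finset.univ hlam'
  have hpar : Even f.signVariations ↔ (Even h.signVariations ↔ Even k) := by
    rw [hf, even_signVariations_mul_iff hh0 (coeff_zero_prod_X_sub_C_ne_zero _ hlam'),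
      even_signVariations_prod_X_sub_C_iff _ hlam', Finset.card_univ, Fintype.card_fin]
  rw [signVar_coeff_eq_signVariations, signVar_coeff_eq_signVariations]
  refine ⟨f.signVariations - (k + h.signVariations), ?_, by omega⟩
  rw [Nat.even_sub (by omega), Nat.even_add]
  tauto

theorem sign_variation_mul_pos_linear_factors (k : ℕ) (h : Polynomial ℝ)
    (hne : h ≠ 0) (h0 : h.eval 0 ≠ 0) (lam : Fin k → ℝ) (hlam : ∀ i, 0 < lam i)
    (f : Polynomial ℝ)
    (hf : f = h * ∏ i : Fin k, (Polynomial.X - Polynomial.C (lam i))) :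
    ∃ ν : ℕ, Even ν ∧
      signVar ((List.range (f.natDegree + 1)).map f.coeff)
        = k + signVar ((List.range (h.natDegree + 1)).map h.coeff) + ν :=
  sign_variation_mul_pos_linear_factors_general k h h0 lam hlam f hf
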